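/- arXiv:1210.4235 — 2 statements merged into one kernel-verified Lean document; each statement's English description precedes it below -/
import Mathlib

section
/- Let L be a normal real n×n matrix with L·1 = 0, 0 a simple eigenvalue, and all other eigenvalues with positive real part. Then for each k, the limit as t → ∞ of ( (k,k) entry of ∫₀^t exp(-Ls) exp(-L^T s) ds − t/n ) exists and equals ∑_{p=2}^n |u^{(p)}_k|² / (2 Re(λ_p)), where λ_p, u^{(p)} are the nonzero eigenvalues and corresponding orthonormal eigenvectors of L. -/
/-!
Since the eigenvectors `u p` of `L` are orthonormal, `L = U diag(λ) Uᴴ` with `U` unitary, so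
`exp(-sL) exp(-sLᵀ) = U diag(exp(-2 Re λ_p s)) Uᴴ` and its `(k,k)` entry is
`∑_p |u_k^{(p)}|² exp(-2 Re λ_p s)`. Integrating term by term, the `p = 0` term contributes
exactly `t / n` (as `λ_0 = 0` and `|u_k^{(0)}|² = 1/n`), while every other term increases to
`|u_k^{(p)}|² / (2 Re λ_p)`.
-/

open Matrix Finset Filter NormedSpace Topology

theorem integral_exp_neg_mul {a : ℝ} (ha : a ≠ 0) (t : ℝ) :
    ∫ s in (0 : ℝ)..t, Real.exp (-(a * s)) = (1 - Real.exp (-(a * t))) / a := by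
  simp_rw [← neg_mul]
  rw [intervalIntegral.integral_comp_mul_left (fun x => Real.exp x) (neg_ne_zero.mpr ha),
    integral_exp, mul_zero, Real.exp_zero, smul_eq_mul, inv_neg, neg_mul, ← mul_neg, neg_sub,
    inv_mul_eq_div]

theorem tendsto_integral_exp_neg_mul {a : ℝ} (ha : 0 < a) :
    Tendsto (fun t => ∫ s in (0 : ℝ)..t, Real.exp (-(a * s))) atTop (𝓝 a⁻¹) := by
  simp_rw [integral_exp_neg_mul ha.ne']
  have hexp : Tendsto (fun t => Real.exp (-(a * t))) atTop (𝓝 0) :=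
    Real.tendsto_exp_atBot.comp (tendsto_neg_atTop_atBot.comp (tendsto_id.const_mul_atTop ha))
  simpa [one_div] using (tendsto_const_nhds (x := (1 : ℝ)).sub hexp).div_const a

theorem tendsto_integral_sum_mul_exp_neg_mul_sub {ι : Type*} [Fintype ι] [DecidableEq ι]
    (c a : ι → ℝ) {p₀ : ι} (ha₀ : a p₀ = 0) (ha : ∀ p ≠ p₀, 0 < a p) :
    Tendsto (fun t => (∫ s in (0 : ℝ)..t, ∑ p, c p * Real.exp (-(a p * s))) - c p₀ * t)
      atTop (𝓝 (∑ p ∈ univ.erase p₀, c p / a p)) := by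
  have hsplit : ∀ t, (∫ s in (0 : ℝ)..t, ∑ p, c p * Real.exp (-(a p * s))) - c p₀ * t
      = ∑ p ∈ univ.erase p₀, c p * ∫ s in (0 : ℝ)..t, Real.exp (-(a p * s)) := by
    intro t
    rw [intervalIntegral.integral_finsetSum
        fun p _ => (by fun_prop : Continuous _).intervalIntegrable _ _,
      sum_erase_eq_sub (mem_univ p₀)]
    simp [ha₀]
  simp_rw [hsplit, div_eq_mul_inv]
  exact tendsto_finsetSum _ fun p hp =>
    (tendsto_integral_exp_neg_mul (ha p (ne_of_mem_erase hp))).const_mul (c p)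

namespace Matrix

variable {ι : Type*} [Fintype ι] [DecidableEq ι]

open scoped Norms.Operator in
theorem map_exp {𝕜 𝕜' : Type*} [RCLike 𝕜] [RCLike 𝕜'] (f : 𝕜 →+* 𝕜') (hf : Continuous f)
    (A : Matrix ι ι 𝕜) : (exp A).map f = exp (A.map f) :=
  NormedSpace.map_exp f.mapMatrix (continuous_id.matrix_map hf) A

theorem conjTranspose_mul_self_of_orthonormal_cols {R : Type*} [CommSemiring R] [StarRing R]
    {U : Matrix ι ι R} (horth : ∀ p q, ∑ i, star (U i p) * U i q = if p = q then 1 else 0) :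
    Uᴴ * U = 1 := by
  ext p q
  simpa [mul_apply, one_apply] using horth p q

theorem eq_mul_diagonal_mul_conjTranspose_of_mulVec_cols {R : Type*} [CommSemiring R] [Star R]
    {A U : Matrix ι ι R} {lam : ι → R} (hU : U * Uᴴ = 1) (heig : ∀ p, A *ᵥ Uᵀ p = lam p • Uᵀ p) :
    A = U * diagonal lam * Uᴴ := by
  have hAU : A * U = U * diagonal lam := by
    ext i p
    rw [mul_diagonal, mul_apply]
    simpa [mulVec, dotProduct, mul_comm] using congrFun (heig p) i
  rw [← hAU, Matrix.mul_assoc, hU, Matrix.mul_one]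

theorem smul_mul_diagonal_mul_conjTranspose {R : Type*} [CommSemiring R] [Star R] (c : R)
    (U : Matrix ι ι R) (d : ι → R) : c • (U * diagonal d * Uᴴ) = U * diagonal (c • d) * Uᴴ := by
  rw [diagonal_smul, Matrix.mul_smul, Matrix.smul_mul]

theorem unitary_conj_diagonal_mul_conjTranspose_self {R : Type*} [CommSemiring R] [StarRing R]
    {U : Matrix ι ι R} (hU : Uᴴ * U = 1) (d : ι → R) :
    U * diagonal d * Uᴴ * (U * diagonal d * Uᴴ)ᴴ = U * diagonal (d * star d) * Uᴴ := by
  simp only [conjTranspose_mul, conjTranspose_conjTranspose, diagonal_conjTranspose,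
    Matrix.mul_assoc]
  rw [← Matrix.mul_assoc Uᴴ, hU, Matrix.one_mul, ← Matrix.mul_assoc (diagonal d),
    diagonal_mul_diagonal]
  rfl

theorem mul_diagonal_ofReal_mul_conjTranspose_apply_self (U : Matrix ι ι ℂ) (w : ι → ℝ) (k : ι) :
    (U * diagonal (fun p => (w p : ℂ)) * Uᴴ) k k = ((∑ p, ‖U k p‖ ^ 2 * w p : ℝ) : ℂ) := by
  rw [mul_apply]
  simp_rw [mul_diagonal, conjTranspose_apply]
  push_cast
  refine sum_congr rfl fun p _ => ?_
  rw [mul_right_comm, ← starRingEnd_apply, Complex.mul_conj, Complex.normSq_eq_norm_sq]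
  norm_cast

theorem exp_unitary_conj_diagonal {U : Matrix ι ι ℂ} (hU : Uᴴ * U = 1) (d : ι → ℂ) :
    exp (U * diagonal d * Uᴴ) = U * diagonal (fun p => Complex.exp (d p)) * Uᴴ := by
  let V : (Matrix ι ι ℂ)ˣ := ⟨U, Uᴴ, mul_eq_one_comm.mp hU, hU⟩
  rw [show U * diagonal d * Uᴴ = V * diagonal d * ↑V⁻¹ from rfl, exp_units_conj, exp_diagonal,
    Pi.exp_def, ← Complex.exp_eq_exp_ℂ]
  rfl

end Matrix

theorem Complex.exp_mul_conj_exp (z : ℂ) :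
    Complex.exp z * starRingEnd ℂ (Complex.exp z) = (Real.exp (2 * z.re) : ℂ) := by
  rw [← Complex.exp_conj, ← Complex.exp_add, Complex.add_conj, Complex.ofReal_exp]

theorem exp_neg_smul_mul_exp_neg_smul_transpose_apply_self {ι : Type*} [Fintype ι]
    [DecidableEq ι] {L : Matrix ι ι ℝ} {lam : ι → ℂ} {u : ι → ι → ℂ}
    (horth : ∀ p q, ∑ i, starRingEnd ℂ (u p i) * u q i = if p = q then 1 else 0)
    (heig : ∀ p, L.map Complex.ofReal *ᵥ u p = lam p • u p) (s : ℝ) (k : ι) :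
    (exp (-(s • L)) * exp (-(s • Lᵀ))) k k
      = ∑ p, ‖u p k‖ ^ 2 * Real.exp (-(2 * (lam p).re * s)) := by
  set U : Matrix ι ι ℂ := (of u)ᵀ
  have hU : Uᴴ * U = 1 := conjTranspose_mul_self_of_orthonormal_cols horth
  have hL : L.map Complex.ofReal = U * diagonal lam * Uᴴ :=
    eq_mul_diagonal_mul_conjTranspose_of_mulVec_cols (mul_eq_one_comm.mp hU) heig
  have hE : (exp (-(s • L))).map Complex.ofReal
      = U * diagonal (fun p => Complex.exp (-(s * lam p))) * Uᴴ := by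
    have hsL : (-(s • L)).map Complex.ofRealHom = (-(s : ℂ)) • L.map Complex.ofReal := by
      ext; simp
    rw [show Complex.ofReal = ⇑Complex.ofRealHom from rfl,
      Matrix.map_exp _ Complex.continuous_ofReal, hsL, hL, smul_mul_diagonal_mul_conjTranspose,
      exp_unitary_conj_diagonal hU]
    simp
  have hEt : exp (-(s • Lᵀ)) = (exp (-(s • L)))ᵀ := by
    rw [← exp_transpose, transpose_neg, transpose_smul]
  have hprod : (exp (-(s • L)) * exp (-(s • Lᵀ))).map Complex.ofReal
      = U * diagonal (fun p => (Real.exp (-(2 * (lam p).re * s)) : ℂ)) * Uᴴ := by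
    have hmul : ∀ A B : Matrix ι ι ℝ,
        (A * B).map Complex.ofReal = A.map Complex.ofReal * B.map Complex.ofReal :=
      fun _ _ => Matrix.map_mul (f := Complex.ofRealHom)
    rw [hEt, hmul, ← conjTranspose_eq_transpose_of_trivial,
      conjTranspose_map _ fun x => (Complex.conj_ofReal x).symm, hE,
      unitary_conj_diagonal_mul_conjTranspose_self hU]
    congr
    ext p
    simp [Complex.exp_mul_conj_exp]
    ring_nf
  apply Complex.ofReal_injective
  have h := congrFun (congrFun hprod k) k
  rw [map_apply, mul_diagonal_ofReal_mul_conjTranspose_apply_self] at h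
  exact h

theorem certainty_index_limit_of_normal_laplacian_general {n : ℕ} [NeZero n]
    (L : Matrix (Fin n) (Fin n) ℝ)
    (lam : Fin n → ℂ) (u : Fin n → Fin n → ℂ)
    (horth : ∀ p q, ∑ i, starRingEnd ℂ (u p i) * u q i = if p = q then 1 else 0)
    (heig : ∀ p, (L.map Complex.ofReal) *ᵥ u p = lam p • u p)
    (hlam0 : lam 0 = 0)
    (hu0 : u 0 = fun _ => (((Real.sqrt n)⁻¹ : ℝ) : ℂ))
    (hre : ∀ p, p ≠ 0 → 0 < (lam p).re)
    (k : Fin n) :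
    Tendsto
      (fun t : ℝ =>
        (∫ s in (0 : ℝ)..t,
            ((NormedSpace.exp (-(s • L))) * (NormedSpace.exp (-(s • Lᵀ)))) k k)
          - t / n)
      atTop
      (nhds (∑ p ∈ Finset.univ.erase 0,
        ‖u p k‖ ^ 2 / (2 * (lam p).re))) := by
  have hu0k : ‖u 0 k‖ ^ 2 = (n : ℝ)⁻¹ := by
    rw [hu0, Complex.norm_real, Real.norm_eq_abs, sq_abs, inv_pow, Real.sq_sqrt n.cast_nonneg]
  have hlim := tendsto_integral_sum_mul_exp_neg_mul_sub (fun p => ‖u p k‖ ^ 2)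
    (fun p => 2 * (lam p).re) (p₀ := 0) (by simp [hlam0]) fun p hp => by linarith [hre p hp]
  simp_rw [exp_neg_smul_mul_exp_neg_smul_transpose_apply_self horth heig]
  convert hlim using 3 with t
  rw [hu0k, div_eq_inv_mul]

/-- For a normal Laplacian `L` with `L·1 = 0`, zero a simple eigenvalue and all
other eigenvalues with positive real part, the (k,k) entry of the covariance
integral minus `t/n` converges as `t → ∞` to `∑_{p≠0} |u⁽ᵖ⁾_k|² / (2 Re λ_p)`. -/
theorem certainty_index_limit_of_normal_laplacian {n : ℕ} [NeZero n]
    (L : Matrix (Fin n) (Fin n) ℝ) (hnormal : L * Lᵀ = Lᵀ * L)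
    (hL1 : L *ᵥ (fun _ => (1 : ℝ)) = 0)
    (lam : Fin n → ℂ) (u : Fin n → Fin n → ℂ)
    (horth : ∀ p q, ∑ i, starRingEnd ℂ (u p i) * u q i = if p = q then 1 else 0)
    (heig : ∀ p, (L.map Complex.ofReal) *ᵥ u p = lam p • u p)
    (hlam0 : lam 0 = 0)
    (hu0 : u 0 = fun _ => (((Real.sqrt n)⁻¹ : ℝ) : ℂ))
    (hre : ∀ p, p ≠ 0 → 0 < (lam p).re)
    (k : Fin n) :
    Tendsto
      (fun t : ℝ =>
        (∫ s in (0 : ℝ)..t,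
            ((NormedSpace.exp (-(s • L))) * (NormedSpace.exp (-(s • Lᵀ)))) k k)
          - t / n)
      atTop
      (nhds (∑ p ∈ Finset.univ.erase 0,
        ‖u p k‖ ^ 2 / (2 * (lam p).re))) :=
  certainty_index_limit_of_normal_laplacian_general L lam u horth heig hlam0 hu0 hre k
end

section
/- Let L̂ be a symmetric real n×n matrix with L̂·1 = 0 and rank n − 1, let C = (L̂ + 1·1^T)^{-1}, and define for each k the quantity 1/κ(k) := (1/n)·∑_{j=1}^n (c_{kk} + c_{jj} − 2c_{kj}). Then 1/κ(k) = L̂^#_{kk} + (1/n)·trace(L̂^#), equivalently (2/σ²)·(1/μ(k)) = 1/κ(k) − K_f/n², where 1/μ(k) = (σ²/2)·L̂^#_{kk} and K_f = n·trace(L̂^#). -/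
/-!
Write `J = 11ᵀ` and `X = L̂^#`. Since `L̂` is symmetric with kernel spanned by `1`, and `X` is
its group inverse, `J L̂ = L̂ J = X J = J X = 0` and `X L̂ = I - J/n`: for each `v`, the vector
`X L̂ v - v` lies in `ker L̂ = ℝ ∙ 1`, and pairing with `1` shows its coefficient is minus the mean
of `v`. Hence `(X + J/n²)(L̂ + J) = I`, i.e. `c_ij = x_ij + 1/n²`, and since the rows of `X` sum
to zero, `∑_j (c_kk + c_jj - 2 c_kj) = n x_kk + tr X`.
-/

open Matrix Finset

section Semigroup

variable {M : Type*} [Semigroup M] {a x : M}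

theorem mul_self_mul_eq_of_commute (hxax : x * a * x = x) (hcomm : Commute a x) :
    x * x * a = x := by
  rw [mul_assoc, ← hcomm.eq, ← mul_assoc, hxax]

theorem mul_mul_self_eq_of_commute (hxax : x * a * x = x) (hcomm : Commute a x) :
    a * x * x = x := by
  rw [hcomm.eq, hxax]

end Semigroup

namespace Matrix

variable {ι R 𝕜 : Type*} [Fintype ι]

theorem mul_ones_eq_zero [NonAssocSemiring R] {A : Matrix ι ι R} (h : A *ᵥ 1 = 0) :
    A * (of fun _ _ => 1 : Matrix ι ι R) = 0 := by
  ext i j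
  simpa [mul_apply, mulVec, dotProduct] using congrFun h i

theorem ones_mul_eq_zero [NonAssocSemiring R] {A : Matrix ι ι R} (h : 1 ᵥ* A = 0) :
    (of fun _ _ => 1 : Matrix ι ι R) * A = 0 := by
  ext i j
  simpa [mul_apply, vecMul, dotProduct] using congrFun h j

theorem ones_mul_ones [NonAssocSemiring R] :
    (of fun _ _ => 1 : Matrix ι ι R) * of (fun _ _ => 1) =
      (Fintype.card ι : R) • (of fun _ _ => 1 : Matrix ι ι R) := by
  ext i j
  simp [mul_apply]

theorem mulVec_one_eq_zero_of_commute [Semiring R] {L X : Matrix ι ι R}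
    (hL1 : L *ᵥ 1 = 0) (hXLX : X * L * X = X) (hcomm : Commute L X) : X *ᵥ 1 = 0 :=
  calc X *ᵥ 1 = (X * X) *ᵥ (L *ᵥ 1) := by
        rw [mulVec_mulVec, mul_self_mul_eq_of_commute hXLX hcomm]
    _ = 0 := by rw [hL1, mulVec_zero]

theorem one_vecMul_eq_zero_of_commute [Semiring R] {L X : Matrix ι ι R}
    (h1L : 1 ᵥ* L = 0) (hXLX : X * L * X = X) (hcomm : Commute L X) : 1 ᵥ* X = 0 :=
  calc 1 ᵥ* X = 1 ᵥ* L ᵥ* (X * X) := by rw [vecMul_vecMul, ← mul_assoc,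
        mul_mul_self_eq_of_commute hXLX hcomm]
    _ = 0 := by rw [h1L, zero_vecMul]

theorem ker_mulVecLin_eq_span_one [Field 𝕜] {L : Matrix ι ι 𝕜} (hL1 : L *ᵥ 1 = 0)
    (hrank : L.rank + 1 = Fintype.card ι) :
    LinearMap.ker L.mulVecLin = 𝕜 ∙ 1 := by
  have : Nonempty ι := Fintype.card_pos_iff.mp (by omega)
  have hker : Module.finrank 𝕜 (LinearMap.ker L.mulVecLin) = 1 := by
    have := LinearMap.finrank_range_add_finrank_ker L.mulVecLin
    rw [Module.finrank_fintype_fun_eq_card] at this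
    change L.rank + _ = _ at this
    omega
  refine (Submodule.eq_of_le_of_finrank_le ?_ ?_).symm
  · rwa [Submodule.span_le, Set.singleton_subset_iff]
  · rw [hker, finrank_span_singleton one_ne_zero]

theorem mul_eq_one_sub_inv_card_smul_ones [Field 𝕜] [CharZero 𝕜] [DecidableEq ι]
    {L X : Matrix ι ι 𝕜} (hL1 : L *ᵥ 1 = 0) (hrank : L.rank + 1 = Fintype.card ι)
    (hLXL : L * X * L = L) (h1X : 1 ᵥ* X = 0) :
    X * L = 1 - (Fintype.card ι : 𝕜)⁻¹ • (of fun _ _ => 1 : Matrix ι ι 𝕜) := by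
  have hn : (Fintype.card ι : 𝕜) ≠ 0 := Nat.cast_ne_zero.mpr (by omega)
  refine ext_iff_mulVec.mpr fun v => ?_
  have hker : X *ᵥ (L *ᵥ v) - v ∈ 𝕜 ∙ 1 := by
    rw [← ker_mulVecLin_eq_span_one hL1 hrank, LinearMap.mem_ker, mulVecLin_apply,
      mulVec_sub, mulVec_mulVec, mulVec_mulVec, hLXL, sub_self]
  obtain ⟨a, ha⟩ := Submodule.mem_span_singleton.mp hker
  have hsum : a * Fintype.card ι = -∑ i, v i := by
    have := congrArg (1 ⬝ᵥ ·) ha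
    simp only [dotProduct_smul, dotProduct_sub, dotProduct_mulVec, h1X, one_dotProduct] at this
    simpa [mul_comm] using this
  have ha' : a = -((Fintype.card ι : 𝕜)⁻¹ * ∑ i, v i) := by
    field_simp
    linear_combination hsum
  have hJv : (of fun _ _ => 1 : Matrix ι ι 𝕜) *ᵥ v = fun _ => ∑ j, v j := by
    ext; simp [mulVec, dotProduct]
  rw [← mulVec_mulVec, sub_mulVec, smul_mulVec, one_mulVec, hJv]
  ext i
  have hi := congrFun ha i
  simp only [Pi.smul_apply, Pi.one_apply, smul_eq_mul, mul_one, Pi.sub_apply] at hi ⊢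
  linear_combination -hi + ha'

theorem inv_add_ones_eq [Field 𝕜] [CharZero 𝕜] [DecidableEq ι] {L X : Matrix ι ι 𝕜}
    (hL1 : L *ᵥ 1 = 0) (h1L : 1 ᵥ* L = 0) (hrank : L.rank + 1 = Fintype.card ι)
    (hLXL : L * X * L = L) (hXLX : X * L * X = X) (hcomm : Commute L X) :
    (L + of fun _ _ => 1)⁻¹ =
      X + ((Fintype.card ι : 𝕜) ^ 2)⁻¹ • (of fun _ _ => 1 : Matrix ι ι 𝕜) := by
  have hn : (Fintype.card ι : 𝕜) ≠ 0 := Nat.cast_ne_zero.mpr (by omega)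
  have hX1 := mulVec_one_eq_zero_of_commute hL1 hXLX hcomm
  have h1X := one_vecMul_eq_zero_of_commute h1L hXLX hcomm
  apply inv_eq_left_inv
  rw [add_mul, mul_add, mul_add, mul_eq_one_sub_inv_card_smul_ones hL1 hrank hLXL h1X,
    mul_ones_eq_zero hX1, smul_mul, smul_mul, ones_mul_eq_zero h1L, ones_mul_ones,
    smul_smul, show ((Fintype.card ι : 𝕜) ^ 2)⁻¹ * Fintype.card ι = (Fintype.card ι : 𝕜)⁻¹ by
      field_simp]
  simp

theorem sum_diag_add_diag_sub_two_mul [CommRing R] {X : Matrix ι ι R} (hX1 : X *ᵥ 1 = 0)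
    (k : ι) : ∑ j, (X k k + X j j - 2 * X k j) = Fintype.card ι * X k k + X.trace := by
  have hrow : ∑ j, X k j = 0 := by simpa [mulVec, dotProduct] using congrFun hX1 k
  rw [sum_sub_distrib, sum_add_distrib, ← mul_sum, hrow, sum_const, card_univ, nsmul_eq_mul]
  simp [trace]

end Matrix

/-- Main theorem relating node certainty and information centrality: with
`C = (L̂ + 11ᵀ)⁻¹` the Stephenson–Zelen information matrix, for every node `k`,
`1/κ(k) = (1/n)·∑_j (c_kk + c_jj − 2 c_kj) = L̂^#_kk + trace(L̂^#)/n`;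
equivalently `(2/σ²)·(1/μ(k)) = 1/κ(k) − K_f/n²` where
`1/μ(k) = (σ²/2)·L̂^#_kk` and `K_f = n·trace(L̂^#)`. -/
theorem info_centrality_eq_certainty {n : ℕ}
    (Lh X : Matrix (Fin n) (Fin n) ℝ)
    (hsym : Lhᵀ = Lh)
    (hL1 : Lh *ᵥ (fun _ => (1 : ℝ)) = 0)
    (hrank : Lh.rank = n - 1)
    (hgi1 : Lh * X * Lh = Lh) (hgi2 : X * Lh * X = X) (hgi3 : Lh * X = X * Lh)
    (C : Matrix (Fin n) (Fin n) ℝ)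
    (hC : C = (Lh + Matrix.of (fun _ _ => (1 : ℝ)))⁻¹)
    (σ : ℝ) (hσ : 0 < σ) (k : Fin n) :
    (1 / n) * (∑ j, (C k k + C j j - 2 * C k j))
        = X k k + X.trace / n ∧
    (2 / σ ^ 2) * ((σ ^ 2 / 2) * X k k)
        = (1 / n) * (∑ j, (C k k + C j j - 2 * C k j))
          - ((n : ℝ) * X.trace) / n ^ 2 := by
  have hn : (n : ℝ) ≠ 0 := Nat.cast_ne_zero.mpr k.pos.ne'
  have h1L : 1 ᵥ* Lh = 0 := by rw [← mulVec_transpose, hsym]; exact hL1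
  have hrank' : Lh.rank + 1 = Fintype.card (Fin n) := by
    rw [hrank, Fintype.card_fin]; have := k.pos; omega
  have hCX : ∀ i j, C i j = X i j + ((n : ℝ) ^ 2)⁻¹ := by
    intro i j
    rw [hC, inv_add_ones_eq hL1 h1L hrank' hgi1 hgi2 hgi3, Fintype.card_fin]
    simp
  have hsum : ∑ j, (C k k + C j j - 2 * C k j) = n * X k k + X.trace := by
    calc ∑ j, (C k k + C j j - 2 * C k j) = ∑ j, (X k k + X j j - 2 * X k j) :=
          sum_congr rfl fun j _ => by rw [hCX, hCX, hCX]; ring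
      _ = n * X k k + X.trace := by
          rw [sum_diag_add_diag_sub_two_mul (mulVec_one_eq_zero_of_commute hL1 hgi2 hgi3),
            Fintype.card_fin]
  have hσ2 : σ ^ 2 ≠ 0 := pow_ne_zero 2 hσ.ne'
  rw [hsum]
  constructor
  · field_simp
  · field_simp
    ring
end
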